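/- arXiv:1804.00939 — 2 statements merged into one kernel-verified Lean document; each statement's English description precedes it below -/
import Mathlib

section
/- Let R be a local ring and I an ideal containing a regular element. If I ⊗_R Hom_R(I,R) is torsionfree, then the canonical evaluation map I ⊗_R Hom_R(I,R) → tr_R(I) is bijective, and consequently ν_R(I)·ν_R(I*) = ν_R(tr_R(I)). -/
open CategoryTheory TensorProduct IsLocalRing

noncomputable section

/-- The minimal number of generators of an `R`-module `M`. -/
def minGen (R M : Type) [CommRing R] [AddCommGroup M] [Module R M] : ℕ :=
  sInf {n | ∃ s : Finset M, s.card = n ∧ Submodule.span R (s : Set M) = ⊤}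

/-- `M` has (generic) rank `r`: at every associated prime of `R`, the localization
of `M` is free of rank `r`. -/
def HasRank (R M : Type) [CommRing R] [AddCommGroup M] [Module R M] (r : ℕ) : Prop :=
  ∀ (p : Ideal R) (hp : p ∈ associatedPrimes R R),
    letI : p.IsPrime := hp.1
    Module.Free (Localization p.primeCompl) (LocalizedModule p.primeCompl M) ∧
      Module.finrank (Localization p.primeCompl) (LocalizedModule p.primeCompl M) = r

/-- The length of a module, as the Krull dimension of its submodule lattice. -/
def mlength (R M : Type) [CommRing R] [AddCommGroup M] [Module R M] : WithBot ℕ∞ :=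
  Order.krullDim (Submodule R M)

/-- The Hilbert–Samuel multiplicity of a one-dimensional local ring `R` is `e`:
the difference `λ(R/m^{n+1}) - λ(R/m^n)` is eventually the constant `e`. -/
def IsMultiplicity (R : Type) [CommRing R] [IsLocalRing R] (e : ℕ) : Prop :=
  ∃ N : ℕ, ∀ n ≥ N,
    mlength R (R ⧸ (maximalIdeal R ^ (n + 1))) =
      mlength R (R ⧸ (maximalIdeal R ^ n)) + ((e : ℕ∞) : WithBot ℕ∞)

/-- `Ext^n_R(M, N)`. -/
abbrev extKGroup (R M N : Type) [CommRing R] [AddCommGroup M] [Module R M]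
    [AddCommGroup N] [Module R N] (n : ℕ) : ModuleCat R :=
  ((Ext R (ModuleCat R) n).obj (Opposite.op (ModuleCat.of R M))).obj (ModuleCat.of R N)

/-- The canonical evaluation map `M ⊗_R M^* → R`. -/
def evalMap (R M : Type) [CommRing R] [AddCommGroup M] [Module R M] :
    M ⊗[R] (M →ₗ[R] R) →ₗ[R] R :=
  TensorProduct.lift LinearMap.applyₗ

/-- The trace ideal of `M`: the image of the evaluation map `M ⊗_R M^* → R`. -/
def traceIdeal (R M : Type) [CommRing R] [AddCommGroup M] [Module R M] : Ideal R :=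
  LinearMap.range (evalMap R M)

/-- A (Noetherian) local ring is Gorenstein of dimension one: it has Krull dimension one
and there is a regular element `x` in the maximal ideal (= the nonunits) such that
`R/(x)` is self-injective. -/
def IsGorensteinLocalOfDimOne (R : Type) [CommRing R] : Prop :=
  IsNoetherianRing R ∧ IsLocalRing R ∧ ringKrullDim R = 1 ∧
    ∃ x ∈ nonunits R, x ∈ nonZeroDivisors R ∧
      Module.Injective (R ⧸ Ideal.span {x}) (R ⧸ Ideal.span {x})

/-- A (Noetherian) local ring of dimension at most one is Gorenstein. -/
def IsGorensteinLocalOfDimLEOne (A : Type) [CommRing A] : Prop :=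
  IsNoetherianRing A ∧ IsLocalRing A ∧
    (Module.Injective A A ∨
      (ringKrullDim A = 1 ∧ ∃ x ∈ nonunits A, x ∈ nonZeroDivisors A ∧
        Module.Injective (A ⧸ Ideal.span {x}) (A ⧸ Ideal.span {x})))

/-- The multiplier set `{α ∈ Q | αA ⊆ A}` of a subset `A` of a ring `Q`. -/
def multEnd {Q : Type} [CommRing Q] (A : Set Q) : Set Q :=
  {α | ∀ a ∈ A, α * a ∈ A}

/-- The image of an ideal `I` in the total quotient ring. -/
def idealImage (R : Type) [CommRing R] (I : Ideal R) : Set (FractionRing R) :=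
  algebraMap R (FractionRing R) '' (I : Set R)

/-- `End_R(I) = {α ∈ Q(R) | α I ⊆ I}` as a submodule of the total quotient ring. -/
def endSubmodule (R : Type) [CommRing R] (I : Ideal R) : Submodule R (FractionRing R) where
  carrier := multEnd (idealImage R I)
  add_mem' := by
    intro a b ha hb x hx
    rw [add_mul]
    obtain ⟨ya, hya, ea⟩ := ha x hx
    obtain ⟨yb, hyb, eb⟩ := hb x hx
    exact ⟨ya + yb, add_mem hya hyb, by rw [map_add, ea, eb]⟩
  zero_mem' := by
    intro x hx
    exact ⟨0, zero_mem _, by rw [map_zero, zero_mul]⟩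
  smul_mem' := by
    intro c a ha x hx
    obtain ⟨y, hy, ey⟩ := ha x hx
    refine ⟨c • y, Submodule.smul_mem _ _ hy, ?_⟩
    rw [Algebra.smul_def, Algebra.smul_def, map_mul, ey, mul_assoc, Algebra.algebraMap_self_apply]

/-! For `t` in the kernel of the evaluation map `ev : I ⊗ I* → R`, the element `mulDual t ∈ I*`,
obtained by multiplying the `I`-factor into the `I*`-factor, is `b ↦ b · ev t = 0`; since
`a ⊗ mulDual t = a t`, the kernel is annihilated by `I`, and a regular element of `I` makes it
torsion. For the count of generators, `ν_R(M) = dim_k (k ⊗ M)` over the residue field `k`,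
which is multiplicative on tensor products. -/

lemma minGen_eq_spanFinrank_top (R M : Type) [CommRing R] [AddCommGroup M] [Module R M] :
    minGen R M = (⊤ : Submodule R M).spanFinrank := by
  rw [Submodule.spanFinrank_eq_iInf, iInf, minGen]
  congr 1
  ext n
  exact ⟨fun ⟨s, hs, hspan⟩ => ⟨⟨s, hspan⟩, hs⟩, fun ⟨s, hs⟩ => ⟨s.1, hs, s.2⟩⟩

section LocalRing

variable {R M N : Type} [CommRing R] [IsLocalRing R]
  [AddCommGroup M] [Module R M] [AddCommGroup N] [Module R N]

lemma minGen_eq_finrank_residueField [Module.Finite R M] :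
    minGen R M = Module.finrank (ResidueField R) (ResidueField R ⊗[R] M) := by
  calc minGen R M = (⊤ : Submodule R M).spanFinrank := minGen_eq_spanFinrank_top R M
    _ = (⊤ : Submodule (ResidueField R) (ResidueField R ⊗[R] (⊤ : Submodule R M))).spanFinrank :=
      (TensorProduct.spanFinrank_top_eq_of_residueField ⊤ Module.Finite.fg_top).symm
    _ = Module.finrank (ResidueField R) (ResidueField R ⊗[R] (⊤ : Submodule R M)) :=
      (Module.finrank_eq_spanFinrank_of_free).symm
    _ = Module.finrank (ResidueField R) (ResidueField R ⊗[R] M) :=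
      (Submodule.topEquiv.baseChange R (ResidueField R) _ _).finrank_eq

lemma minGen_congr [Module.Finite R M] [Module.Finite R N] (e : M ≃ₗ[R] N) :
    minGen R M = minGen R N := by
  rw [minGen_eq_finrank_residueField, minGen_eq_finrank_residueField,
    (e.baseChange R (ResidueField R) _ _).finrank_eq]

lemma minGen_tensorProduct [Module.Finite R M] [Module.Finite R N] :
    minGen R (M ⊗[R] N) = minGen R M * minGen R N := by
  rw [minGen_eq_finrank_residueField, minGen_eq_finrank_residueField,
    minGen_eq_finrank_residueField,
    (AlgebraTensorModule.distribBaseChange R (ResidueField R) M N).finrank_eq,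
    Module.finrank_tensorProduct]

end LocalRing

namespace Ideal

variable {R : Type} [CommRing R] (I : Ideal R)

lemma mul_apply_comm (f : I →ₗ[R] R) (a b : I) : (a : R) * f b = (b : R) * f a := by
  rw [← smul_eq_mul, ← map_smul, ← smul_eq_mul (b : R), ← map_smul]
  exact congrArg f (Subtype.ext (mul_comm _ _))

def mulDual : I ⊗[R] (I →ₗ[R] R) →ₗ[R] (I →ₗ[R] R) :=
  TensorProduct.lift ((LinearMap.lsmul R (I →ₗ[R] R)).comp I.subtype)

lemma mulDual_apply (t : I ⊗[R] (I →ₗ[R] R)) (b : I) :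
    I.mulDual t b = b * evalMap R I t := by
  induction t using TensorProduct.induction_on with
  | zero => simp
  | tmul a f => simpa [mulDual, evalMap] using I.mul_apply_comm f a b
  | add u v hu hv => simp [hu, hv, mul_add]

lemma tmul_mulDual (a : I) (t : I ⊗[R] (I →ₗ[R] R)) : a ⊗ₜ I.mulDual t = (a : R) • t := by
  induction t using TensorProduct.induction_on with
  | zero => simp
  | tmul b f =>
    rw [mulDual, lift.tmul, LinearMap.comp_apply, Submodule.subtype_apply, LinearMap.lsmul_apply,
      tmul_smul, smul_tmul', smul_tmul']
    exact congrArg (· ⊗ₜ f) (Subtype.ext (mul_comm _ _))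
  | add u v hu hv => rw [map_add, tmul_add, hu, hv, smul_add]

lemma smul_eq_zero_of_evalMap_eq_zero {t : I ⊗[R] (I →ₗ[R] R)} (ht : evalMap R I t = 0) (a : I) :
    (a : R) • t = 0 := by
  have : I.mulDual t = 0 := LinearMap.ext fun b => by simp [mulDual_apply, ht]
  rw [← tmul_mulDual, this, tmul_zero]

lemma ker_evalMap_le_torsion (hreg : ∃ x ∈ I, x ∈ nonZeroDivisors R) :
    LinearMap.ker (evalMap R I) ≤ Submodule.torsion R (I ⊗[R] (I →ₗ[R] R)) := by
  obtain ⟨x, hxI, hx⟩ := hreg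
  exact fun t ht => ⟨⟨x, hx⟩, I.smul_eq_zero_of_evalMap_eq_zero ht ⟨x, hxI⟩⟩

end Ideal

theorem stmt_6 (R : Type) [CommRing R] [IsLocalRing R] [IsNoetherianRing R]
    (I : Ideal R) (hreg : ∃ x ∈ I, x ∈ nonZeroDivisors R)
    (htf : Submodule.torsion R ((↥I) ⊗[R] (↥I →ₗ[R] R)) = ⊥) :
    Function.Bijective (LinearMap.rangeRestrict (evalMap R ↥I)) ∧
      minGen R ↥I * minGen R (↥I →ₗ[R] R) = minGen R ↥(traceIdeal R ↥I) := by
  have hinj : Function.Injective (evalMap R I) := by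
    rw [← LinearMap.ker_eq_bot, eq_bot_iff, ← htf]
    exact I.ker_evalMap_le_torsion hreg
  have hbij : Function.Bijective (evalMap R I).rangeRestrict :=
    ⟨(evalMap R I).injective_rangeRestrict_iff.mpr hinj, (evalMap R I).surjective_rangeRestrict⟩
  exact ⟨hbij, minGen_tensorProduct.symm.trans (minGen_congr (LinearEquiv.ofBijective _ hbij))⟩
end
end

section
/- Let S be a Noetherian ring and I, J ideals each containing a regular element. If I and J are linked via a regular sequence x (i.e., J = ((x):I) and I = ((x):J)), then End_S(I) = End_S(J) as subrings of the total quotient ring of S (or of the integral closure of S). -/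
open CategoryTheory TensorProduct IsLocalRing

noncomputable section

/-!
Split by the length of the linking sequence `x`. If it has at least two terms, its first two
form a regular sequence inside both `I` and `J`, and an ideal of grade `≥ 2` has `End = S`, so
both sides are `S`. If `x = a` is a single regular element, then for `α ∈ End(I)` and
`j ∈ J = (a) : I` the element `j (α a) ∈ j I ⊆ (a)` shows `α j ∈ S`, and `α j I ⊆ j I ⊆ (a)`
gives `α j ∈ J`; by symmetry `End(I) = End(J)`. The empty sequence links `I` to `ann I = 0`,
which contains a regular element only when `S = 0`.
-/

open RingTheory.Sequence Pointwise nonZeroDivisors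

section

variable {S : Type} [CommRing S]

theorem IsSMulRegular.mem_nonZeroDivisors_self {a : S} (h : IsSMulRegular S a) : a ∈ S⁰ :=
  mem_nonZeroDivisors_iff_right.mpr fun x hx =>
    h.right_eq_zero_of_smul (by rw [smul_eq_mul, mul_comm, hx])

theorem range_algebraMap_subset_multEnd_idealImage (I : Ideal S) :
    Set.range (algebraMap S (FractionRing S)) ⊆ multEnd (idealImage S I) := by
  rintro _ ⟨s, rfl⟩ _ ⟨i, hi, rfl⟩
  exact ⟨s * i, I.mul_mem_left s hi, map_mul _ _ _⟩

/-- `α a = c` and `α b = d` give `b c = a d`, so `a ∣ c` and `α = c / a ∈ S`. -/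
theorem multEnd_idealImage_eq_range {I : Ideal S} {a b : S} (ha : a ∈ I) (hb : b ∈ I)
    (ha_reg : a ∈ S⁰) (hb_reg : IsSMulRegular (QuotSMulTop a S) b) :
    multEnd (idealImage S I) = Set.range (algebraMap S (FractionRing S)) := by
  refine subset_antisymm (fun α hα => ?_) (range_algebraMap_subset_multEnd_idealImage I)
  obtain ⟨c, -, hc⟩ := hα _ ⟨a, ha, rfl⟩
  obtain ⟨d, -, hd⟩ := hα _ ⟨b, hb, rfl⟩
  have hbc : b • c = a • d := IsFractionRing.injective S (FractionRing S) <| by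
    simp only [smul_eq_mul, map_mul, hc, hd]
    ring
  have hc_mem : c ∈ a • (⊤ : Submodule S S) := mem_of_isSMulRegular_quotient_of_smul_mem hb_reg
    (hbc ▸ Submodule.smul_mem_pointwise_smul d a ⊤ trivial)
  obtain ⟨t, -, rfl⟩ := (Submodule.mem_smul_pointwise_iff_exists _ _ _).mp hc_mem
  refine ⟨t, (IsLocalization.map_units (FractionRing S) ⟨a, ha_reg⟩).mul_left_cancel ?_⟩
  rw [← map_mul, ← smul_eq_mul, hc, mul_comm]

theorem multEnd_idealImage_subset_colon_span_singleton {I J : Ideal S} {a : S} (ha : a ∈ I)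
    (ha_reg : a ∈ S⁰) (hJ : J = (Ideal.span {a}).colon I) :
    multEnd (idealImage S I) ⊆ multEnd (idealImage S J) := by
  subst hJ
  rintro α hα _ ⟨j, hj, rfl⟩
  obtain ⟨b, hb, hba⟩ := hα _ ⟨a, ha, rfl⟩
  obtain ⟨t, ht⟩ := Ideal.mem_span_singleton'.mp (Submodule.mem_colon.mp hj b hb)
  have htα : algebraMap S (FractionRing S) t = α * algebraMap S (FractionRing S) j :=
    (IsLocalization.map_units (FractionRing S) ⟨a, ha_reg⟩).mul_left_cancel <| by
      rw [← map_mul, mul_comm, ht, smul_eq_mul, map_mul, hba]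
      ring
  refine ⟨t, Submodule.mem_colon.mpr fun i hi => ?_, htα⟩
  obtain ⟨c, hc, hci⟩ := hα _ ⟨i, hi, rfl⟩
  have hti : t * i = j * c := IsFractionRing.injective S (FractionRing S) <| by
    rw [map_mul, map_mul, htα, hci]
    ring
  rw [smul_eq_mul, hti]
  exact Submodule.mem_colon.mp hj c hc

end

theorem stmt_16_general (S : Type) [CommRing S]
    (I J : Ideal S) (hI : ∃ x ∈ I, x ∈ nonZeroDivisors S)
    (hJ : ∃ x ∈ J, x ∈ nonZeroDivisors S)
    (xs : List S) (hxs : RingTheory.Sequence.IsRegular S xs)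
    (hmem : ∀ x ∈ xs, x ∈ I ⊓ J)
    (h1 : J = (Ideal.ofList xs).colon I) (h2 : I = (Ideal.ofList xs).colon J) :
    multEnd (idealImage S I) = multEnd (idealImage S J) := by
  have hreg := hxs.toIsWeaklyRegular
  rcases xs with _ | ⟨a, _ | ⟨b, rest⟩⟩
  · obtain ⟨a, ha, ha_reg⟩ := hI
    obtain ⟨b, hb, hb_reg⟩ := hJ
    rw [h1, Ideal.ofList_nil, Submodule.mem_colon] at hb
    have hb0 : b = 0 := mem_nonZeroDivisors_iff_right.mp ha_reg b (hb a ha)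
    have : Subsingleton S :=
      not_nontrivial_iff_subsingleton.mp fun _ => nonZeroDivisors.ne_zero hb_reg hb0
    rw [Subsingleton.elim I J]
  · have ha_reg := ((isWeaklyRegular_singleton_iff S a).mp hreg).mem_nonZeroDivisors_self
    obtain ⟨haI, haJ⟩ := hmem a (List.mem_singleton_self a)
    rw [Ideal.ofList_singleton] at h1 h2
    exact (multEnd_idealImage_subset_colon_span_singleton haI ha_reg h1).antisymm
      (multEnd_idealImage_subset_colon_span_singleton haJ ha_reg h2)
  · obtain ⟨ha_reg, hrest⟩ := (isWeaklyRegular_cons_iff S a _).mp hreg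
    have hb_reg := ((isWeaklyRegular_cons_iff _ b rest).mp hrest).1
    obtain ⟨haI, haJ⟩ := hmem a (by simp)
    obtain ⟨hbI, hbJ⟩ := hmem b (by simp)
    rw [multEnd_idealImage_eq_range haI hbI ha_reg.mem_nonZeroDivisors_self hb_reg,
      multEnd_idealImage_eq_range haJ hbJ ha_reg.mem_nonZeroDivisors_self hb_reg]

theorem stmt_16 (S : Type) [CommRing S] [IsNoetherianRing S]
    (I J : Ideal S) (hI : ∃ x ∈ I, x ∈ nonZeroDivisors S)
    (hJ : ∃ x ∈ J, x ∈ nonZeroDivisors S)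
    (xs : List S) (hxs : RingTheory.Sequence.IsRegular S xs)
    (hmem : ∀ x ∈ xs, x ∈ I ⊓ J)
    (h1 : J = (Ideal.ofList xs).colon I) (h2 : I = (Ideal.ofList xs).colon J) :
    multEnd (idealImage S I) = multEnd (idealImage S J) :=
  stmt_16_general S I J hI hJ xs hxs hmem h1 h2
end
end
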